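/- arXiv:1703.09732 — 2 statements merged into one kernel-verified Lean document; each statement's English description precedes it below -/
import Mathlib

section
/- Let s >= 2, t >= s, and suppose n = s-1+k*t for a positive integer k. Then the largest adjacency eigenvalue of the join of K_{s-1} with k disjoint copies of K_t equals (s+t-3 + sqrt((s+t-3)^2 + 4((s-1)(n-s+1) - (s-2)(t-1))))/2. -/
/-
The vertex set splits into the clique `K_{s-1}` and the `k` copies of `K_t`, and both parts are
regular, so the join has a positive eigenvector that is constant on each part; its eigenvalue `λ` is
the largest root of `(λ - (s-2)) (λ - (t-1)) = (s-1) k t`, the characteristic equation of the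
2 × 2 quotient matrix. For a nonnegative matrix, the eigenvalue of a positive eigenvector bounds
the absolute value of every real eigenvalue (compare each eigenvector with it at the coordinate
where their ratio is largest), so `λ` is the largest eigenvalue.
-/

open SimpleGraph Finset

attribute [local instance] Classical.propDecidable

/-- The largest eigenvalue of a real matrix, as the supremum of its eigenvalues. -/
noncomputable def lam1 {V : Type*} [Fintype V] (A : Matrix V V ℝ) : ℝ :=
  sSup {t : ℝ | ∃ x : V → ℝ, x ≠ 0 ∧ A.mulVec x = t • x}

/-- The join of two simple graphs: all edges of both graphs plus all edges between them. -/
def SimpleGraph.join {α β : Type*} (G : SimpleGraph α) (H : SimpleGraph β) :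
    SimpleGraph (α ⊕ β) where
  Adj x y :=
    match x, y with
    | Sum.inl a, Sum.inl b => G.Adj a b
    | Sum.inr a, Sum.inr b => H.Adj a b
    | Sum.inl _, Sum.inr _ => True
    | Sum.inr _, Sum.inl _ => True
  symm := by refine ⟨?_⟩; rintro (a | a) (b | b) h
             · exact G.adj_symm h
             · trivial
             · trivial
             · exact H.adj_symm h
  loopless := by refine ⟨?_⟩; rintro (a | a) h
                 · exact G.irrefl h
                 · exact H.irrefl h

/-- The disjoint union of `k` copies of the complete graph `K_t`. -/
def cliqueUnion (k t : ℕ) : SimpleGraph (Fin k × Fin t) where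
  Adj p q := p.1 = q.1 ∧ p ≠ q
  symm := by refine ⟨?_⟩; rintro p q ⟨h1, h2⟩; exact ⟨h1.symm, h2.symm⟩
  loopless := by refine ⟨?_⟩; rintro p ⟨h1, h2⟩; exact h2 rfl

open scoped Matrix

theorem abs_le_of_mulVec_le_smul {V : Type*} [Fintype V] {A : Matrix V V ℝ}
    (hA : ∀ i j, 0 ≤ A i j) {v : V → ℝ} (hv : ∀ i, 0 < v i) {L : ℝ} (hAv : A *ᵥ v ≤ L • v)
    {μ : ℝ} {y : V → ℝ} (hy : y ≠ 0) (hμ : A *ᵥ y = μ • y) : |μ| ≤ L := by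
  obtain ⟨j₀, hj₀⟩ : ∃ j, y j ≠ 0 := by
    by_contra! h
    exact hy (funext h)
  obtain ⟨i, -, hi⟩ := exists_max_image univ (fun j => |y j| / v j) ⟨j₀, mem_univ _⟩
  set c := |y i| / v i
  have hyc : ∀ j, |y j| ≤ c * v j := fun j => (div_le_iff₀ (hv j)).1 (hi j (mem_univ j))
  have hyi : |y i| = c * v i := (div_mul_cancel₀ _ (hv i).ne').symm
  have hc : 0 < c := (div_pos (abs_pos.2 hj₀) (hv j₀)).trans_le (hi j₀ (mem_univ _))
  have key : |μ| * |y i| ≤ L * |y i| := calc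
    |μ| * |y i| = |∑ j, A i j * y j| := by
      rw [← abs_mul, ← smul_eq_mul, ← Pi.smul_apply, ← hμ]; rfl
    _ ≤ ∑ j, A i j * |y j| := by
      refine (abs_sum_le_sum_abs _ _).trans_eq (sum_congr rfl fun j _ => ?_)
      rw [abs_mul, abs_of_nonneg (hA i j)]
    _ ≤ ∑ j, A i j * (c * v j) := by gcongr with j; exacts [hA i j, hyc j]
    _ = c * (A *ᵥ v) i := by
      simp only [Matrix.mulVec, dotProduct, mul_sum]
      exact sum_congr rfl fun j _ => by ring
    _ ≤ c * (L * v i) := by gcongr; exact hAv i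
    _ = L * |y i| := by rw [hyi]; ring
  exact le_of_mul_le_mul_right key (by rw [hyi]; exact mul_pos hc (hv i))

theorem lam1_eq_of_pos_eigenvector {V : Type*} [Fintype V] [Nonempty V] {A : Matrix V V ℝ}
    (hA : ∀ i j, 0 ≤ A i j) {v : V → ℝ} (hv : ∀ i, 0 < v i) {L : ℝ} (hAv : A *ᵥ v = L • v) :
    lam1 A = L := by
  refine IsGreatest.csSup_eq ⟨⟨v, fun h => ?_, hAv⟩, ?_⟩
  · exact (hv (Classical.arbitrary V)).ne' (congrFun h _)
  · rintro μ ⟨y, hy, hμ⟩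
    exact (le_abs_self μ).trans (abs_le_of_mulVec_le_smul hA hv hAv.le hy hμ)

namespace SimpleGraph

variable {α β : Type*}

theorem adjMatrix_join (G : SimpleGraph α) (H : SimpleGraph β) [DecidableRel G.Adj]
    [DecidableRel H.Adj] :
    (G.join H).adjMatrix ℝ =
      Matrix.fromBlocks (G.adjMatrix ℝ) (Matrix.of fun _ _ => 1) (Matrix.of fun _ _ => 1)
        (H.adjMatrix ℝ) := by
  ext (a | a) (b | b)
  · exact if_congr Iff.rfl rfl rfl
  · exact if_pos trivial
  · exact if_pos trivial
  · exact if_congr Iff.rfl rfl rfl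

variable [Fintype α] [Fintype β]

theorem adjMatrix_join_mulVec_sumElim {G : SimpleGraph α} {H : SimpleGraph β} [DecidableRel G.Adj]
    [DecidableRel H.Adj] {p q : ℕ}
    (hG : G.IsRegularOfDegree p) (hH : H.IsRegularOfDegree q) (x y : ℝ) :
    (G.join H).adjMatrix ℝ *ᵥ Sum.elim (fun _ => x) (fun _ => y) =
      Sum.elim (fun _ => p * x + Fintype.card β * y) (fun _ => Fintype.card α * x + q * y) := by
  rw [adjMatrix_join, Matrix.fromBlocks_mulVec]
  ext (a | b)
  · simp only [Sum.elim_inl, Pi.add_apply]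
    rw [← adjMatrix_mulVec_const_apply_of_regular (α := ℝ) (a := x) hG (v := a)]
    simp [Matrix.mulVec, dotProduct]
  · simp only [Sum.elim_inr, Pi.add_apply]
    rw [← adjMatrix_mulVec_const_apply_of_regular (α := ℝ) (a := y) hH (v := b)]
    simp [Matrix.mulVec, dotProduct]

theorem lam1_adjMatrix_join_of_isRegularOfDegree [Nonempty α] [Nonempty β]
    {G : SimpleGraph α} {H : SimpleGraph β} [DecidableRel G.Adj] [DecidableRel H.Adj] {p q : ℕ}
    (hG : G.IsRegularOfDegree p) (hH : H.IsRegularOfDegree q) :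
    lam1 ((G.join H).adjMatrix ℝ) =
      (p + q + √((p - q) ^ 2 + 4 * Fintype.card α * Fintype.card β)) / 2 := by
  set m : ℝ := (Fintype.card α : ℝ)
  set r : ℝ := (Fintype.card β : ℝ)
  set L := ((p : ℝ) + q + √((p - q) ^ 2 + 4 * m * r)) / 2
  have hm : 0 < m := by simp [m, Fintype.card_pos]
  have hr : 0 < r := by simp [r, Fintype.card_pos]
  have hdisc : 0 ≤ (p - q : ℝ) ^ 2 + 4 * m * r := by positivity
  have hsqrt : |(p - q : ℝ)| < √((p - q) ^ 2 + 4 * m * r) := by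
    rw [← Real.sqrt_sq_eq_abs]
    exact Real.sqrt_lt_sqrt (sq_nonneg _) (by nlinarith)
  have hLq : 0 < L - q := by
    have := neg_abs_le (p - q : ℝ)
    simp only [L]
    linarith
  have hroot : (L - p) * (L - q) = m * r := by
    have := Real.sq_sqrt hdisc
    simp only [L]
    linear_combination this / 4
  refine lam1_eq_of_pos_eigenvector (v := Sum.elim (fun _ => L - q) (fun _ => m)) ?_ ?_ ?_
  · intro i j
    rw [adjMatrix_apply]
    split_ifs <;> norm_num
  · rintro (a | b)
    exacts [hLq, hm]
  · rw [adjMatrix_join_mulVec_sumElim hG hH]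
    ext (a | b)
    · simp only [Sum.elim_inl, Pi.smul_apply, smul_eq_mul]
      linear_combination -hroot
    · simp only [Sum.elim_inr, Pi.smul_apply, smul_eq_mul]
      ring

end SimpleGraph

theorem cliqueUnion_isRegularOfDegree (k t : ℕ) : (cliqueUnion k t).IsRegularOfDegree (t - 1) := by
  intro x
  have hN : (cliqueUnion k t).neighborFinset x = ({x.1} ×ˢ univ).erase x := by
    ext y
    rw [mem_neighborFinset, mem_erase, mem_product, mem_singleton]
    simp only [cliqueUnion, mem_univ, and_true]
    tauto
  rw [← card_neighborFinset_eq_degree, hN, card_erase_of_mem (by simp), card_product, card_univ,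
    Fintype.card_fin, card_singleton, one_mul]

theorem stmt8 (s t k n : ℕ) (hs : 2 ≤ s) (hst : s ≤ t) (hk : 1 ≤ k)
    (hn : n = s - 1 + k * t) :
    lam1 (((completeGraph (Fin (s - 1))).join (cliqueUnion k t)).adjMatrix ℝ) =
      ((s : ℝ) + (t : ℝ) - 3 + Real.sqrt (((s : ℝ) + (t : ℝ) - 3) ^ 2 +
        4 * (((s : ℝ) - 1) * ((n : ℝ) - (s : ℝ) + 1) - ((s : ℝ) - 2) * ((t : ℝ) - 1)))) / 2 := by
  have : Nonempty (Fin (s - 1)) := ⟨⟨0, by omega⟩⟩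
  have : Nonempty (Fin k × Fin t) := ⟨(⟨0, by omega⟩, ⟨0, by omega⟩)⟩
  have hK : (completeGraph (Fin (s - 1))).IsRegularOfDegree (s - 2) := by
    convert IsRegularOfDegree.top (V := Fin (s - 1)) using 1
    rw [Fintype.card_fin]
    omega
  rw [SimpleGraph.lam1_adjMatrix_join_of_isRegularOfDegree hK (cliqueUnion_isRegularOfDegree k t)]
  simp only [Fintype.card_fin, Fintype.card_prod, hn]
  push_cast [Nat.cast_sub (by omega : 2 ≤ s), Nat.cast_sub (by omega : 1 ≤ s),
    Nat.cast_sub (by omega : 1 ≤ t)]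
  ring_nf
end

section
/- Let G be a finite simple graph and suppose there exist disjoint vertex sets K and T with |T| >= 3 such that every vertex of K is adjacent to every vertex of T, and two distinct vertices u, v in T are adjacent. If |T| >= binomial(|K|,2) + 2, then G contains a subdivision of the complete graph K_{|K|+2} (equivalently, a topological minor, hence a minor, of K_{|K|+2}). -/
open SimpleGraph Finset

attribute [local instance] Classical.propDecidable

/-- `H` is a minor of `G`: there are nonempty, pairwise disjoint, connected branch sets
in `G`, one for each vertex of `H`, with an edge of `G` between the branch sets of any
two adjacent vertices of `H`. -/
def SimpleGraph.IsMinor {α β : Type*} (H : SimpleGraph α) (G : SimpleGraph β) : Prop :=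
  ∃ B : α → Set β, (∀ a, (B a).Nonempty) ∧ (∀ a, (G.induce (B a)).Connected) ∧
    (Pairwise fun a b => Disjoint (B a) (B b)) ∧
    (∀ a b, H.Adj a b → ∃ x ∈ B a, ∃ y ∈ B b, G.Adj x y)

/-!
The branch set of `k ∈ K` is a star formed by `k` and some vertices of `T \ {u, v}`; the branch
sets of `u` and `v` are `{u}` and `{v}`. Since `T \ {u, v}` has at least `|K| choose 2` vertices,
every pair `{k, l}` of vertices of `K` gets a private vertex of `T \ {u, v}`, adjacent to both `k`
and `l`; put into the branch set of `k`, it supplies the edge to the branch set of `l`. All other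
required edges (`uv`, `uk`, `vk`) are already edges of `G`.
-/

theorem Finset.card_sym2_filter_not_isDiag {α : Type*} (s : Finset α) :
    #{z ∈ s.sym2 | ¬z.IsDiag} = s.card.choose 2 := by
  have hdiag : {z ∈ s.sym2 | z.IsDiag} = s.image Sym2.diag := by
    ext z
    induction z using Sym2.ind with
    | h a b =>
      simp only [mem_filter, mk_mem_sym2_iff, Sym2.mk_isDiag_iff, mem_image, Sym2.diag,
        Sym2.eq_iff]
      grind
  have hsplit := card_filter_add_card_filter_not (s := s.sym2) Sym2.IsDiag
  rw [hdiag, card_image_of_injective s Sym2.diag_injective, card_sym2,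
    Nat.choose_succ_succ' _ 1, Nat.choose_one_right] at hsplit
  exact Nat.add_left_cancel hsplit

theorem Finset.exists_mapsTo_injOn_of_card_le {α β : Type*} [Nonempty β] {s : Finset α}
    {t : Finset β} (h : s.card ≤ t.card) :
    ∃ f : α → β, Set.MapsTo f s t ∧ Set.InjOn f s := by
  refine (finite_toSet s).exists_injOn_of_encard_le (t := (t : Set β)) ?_
  rwa [Set.encard_coe_eq_coe_finsetCard, Set.encard_coe_eq_coe_finsetCard, Nat.cast_le]

namespace SimpleGraph

theorem IsMinor.of_embedding {α β γ : Type*} {H : SimpleGraph α} {H' : SimpleGraph β}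
    {G : SimpleGraph γ} (f : H' ↪g H) (h : H.IsMinor G) : H'.IsMinor G := by
  obtain ⟨B, hne, hconn, hdisj, hadj⟩ := h
  exact ⟨B ∘ f, fun _ => hne _, fun _ => hconn _, fun _ _ hab => hdisj (f.injective.ne hab),
    fun _ _ hab => hadj _ _ (f.map_adj_iff.mpr hab)⟩

variable {V : Type*} (G : SimpleGraph V)

theorem induce_insert_connected_of_forall_adj {a : V} {L : Set V} (h : ∀ b ∈ L, G.Adj a b) :
    (G.induce (insert a L)).Connected := by
  rw [connected_iff_exists_forall_reachable]
  refine ⟨⟨a, Set.mem_insert a L⟩, fun ⟨b, hb⟩ => ?_⟩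
  rcases eq_or_ne b a with rfl | hne
  · rfl
  · exact Adj.reachable (h b (hb.resolve_left hne))

theorem completeGraph_isMinor_of_subdivision {W : Set V} {P : Set (Sym2 V)} {c : Sym2 V → V}
    (hcover : ∀ a ∈ W, ∀ b ∈ W, a ≠ b → G.Adj a b ∨ s(a, b) ∈ P)
    (hP : ∀ z ∈ P, ∀ w ∈ z, w ∈ W ∧ G.Adj w (c z))
    (hc : Set.InjOn c P) (hcW : Set.MapsTo c P Wᶜ) :
    (completeGraph W).IsMinor G := by
  -- `c z` joins the branch set of the end `z.out.1` of `z`; which end is chosen does not matter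
  refine ⟨fun w => insert (w : V) (c '' {z ∈ P | z.out.1 = w}),
    fun _ => Set.insert_nonempty _ _, fun w => ?_, fun a b hab => ?_, fun a b hab => ?_⟩
  · refine G.induce_insert_connected_of_forall_adj ?_
    rintro _ ⟨z, ⟨hzP, hzw⟩, rfl⟩
    exact hzw ▸ (hP z hzP _ z.out_fst_mem).2
  · refine Set.disjoint_left.mpr ?_
    rintro x (rfl | ⟨z, ⟨hzP, hza⟩, rfl⟩) (hxb | ⟨z', ⟨hz'P, hz'b⟩, hz'⟩)
    · exact hab (Subtype.ext hxb)
    · exact hcW hz'P (hz' ▸ a.2)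
    · exact hcW hzP (hxb ▸ b.2)
    · exact hab (Subtype.ext (hza.symm.trans (hc hz'P hzP hz' ▸ hz'b)))
  · rcases hcover a a.2 b b.2 (Subtype.coe_ne_coe.mpr hab) with h | h
    · exact ⟨a, Set.mem_insert _ _, b, Set.mem_insert _ _, h⟩
    rcases Sym2.mem_iff.mp (s(a.1, b.1).out_fst_mem) with ho | ho
    · exact ⟨_, Set.mem_insert_of_mem _ ⟨_, ⟨h, ho⟩, rfl⟩, b, Set.mem_insert _ _,
        (hP _ h b (Sym2.mem_mk_right _ _)).2.symm⟩
    · exact ⟨a, Set.mem_insert _ _, _, Set.mem_insert_of_mem _ ⟨_, ⟨h, ho⟩, rfl⟩,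
        (hP _ h a (Sym2.mem_mk_left _ _)).2⟩

theorem completeGraph_isMinor_of_isClique_of_subdivision {A K M : Set V} {c : Sym2 V → V}
    (hA : G.IsClique A) (hAK : ∀ a ∈ A, ∀ k ∈ K, G.Adj a k)
    (hKM : ∀ k ∈ K, ∀ m ∈ M, G.Adj k m) (hM : Disjoint M (A ∪ K))
    (hcM : Set.MapsTo c {z ∈ K.sym2 | ¬z.IsDiag} M)
    (hc : Set.InjOn c {z ∈ K.sym2 | ¬z.IsDiag}) :
    (completeGraph ↥(A ∪ K)).IsMinor G := by
  refine G.completeGraph_isMinor_of_subdivision ?_ (fun z hz k hk => ?_) hc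
    (fun z hz => Set.disjoint_left.mp hM (hcM hz))
  · rintro a (ha | ha) b (hb | hb) hab
    · exact Or.inl (hA ha hb hab)
    · exact Or.inl (hAK a ha b hb)
    · exact Or.inl (hAK b hb a ha).symm
    · exact Or.inr ⟨Set.mk_mem_sym2_iff.mpr ⟨ha, hb⟩, Sym2.mk_isDiag_iff.not.mpr hab⟩
  · have hkK : k ∈ K := Set.mem_sym2_iff_subset.mp hz.1 hk
    exact ⟨Or.inr hkK, hKM k hkK _ (hcM hz)⟩

end SimpleGraph

theorem stmt13_general {V : Type*} (G : SimpleGraph V) (K T : Finset V)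
    (hdisj : Disjoint K T)
    (hjoin : ∀ k ∈ K, ∀ t ∈ T, G.Adj k t)
    (u v : V) (hu : u ∈ T) (hv : v ∈ T) (huv : u ≠ v) (hadj : G.Adj u v)
    (hTbig : K.card.choose 2 + 2 ≤ T.card) :
    (completeGraph (Fin (K.card + 2))).IsMinor G := by
  have : Nonempty V := ⟨u⟩
  have huvT : {u, v} ⊆ T := by simp [insert_subset_iff, hu, hv]
  obtain ⟨c, hcM, hc⟩ : ∃ c : Sym2 V → V,
      Set.MapsTo c {z ∈ (K : Set V).sym2 | ¬z.IsDiag} ↑(T \ {u, v}) ∧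
        Set.InjOn c {z ∈ (K : Set V).sym2 | ¬z.IsDiag} := by
    have hP : {z ∈ (K : Set V).sym2 | ¬z.IsDiag} = ↑{z ∈ K.sym2 | ¬z.IsDiag} := by
      rw [← coe_sym2, coe_filter]; rfl
    rw [hP]
    refine exists_mapsTo_injOn_of_card_le ?_
    rw [card_sym2_filter_not_isDiag, card_sdiff_of_subset huvT, card_pair huv]
    omega
  have hM : Disjoint (↑(T \ {u, v}) : Set V) (↑({u, v} : Finset V) ∪ ↑K) := by
    rw [← coe_union, disjoint_coe, disjoint_union_right]
    exact ⟨sdiff_disjoint, hdisj.symm.mono_left sdiff_subset⟩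
  have hminor := G.completeGraph_isMinor_of_isClique_of_subdivision
    (by simpa [isClique_pair] using fun _ => hadj)
    (by simpa using ⟨fun k hk => (hjoin k hk u hu).symm, fun k hk => (hjoin k hk v hv).symm⟩)
    (fun k hk m hm => hjoin k hk m (mem_sdiff.mp hm).1) hM hcM hc
  rw [← coe_union] at hminor
  have hcard : ({u, v} ∪ K).card = K.card + 2 := by
    rw [card_union_of_disjoint (hdisj.symm.mono_left huvT), card_pair huv, add_comm]
  exact hminor.of_embedding
    (Embedding.completeGraph (((({u, v} ∪ K).equivFin.trans (finCongr hcard)).symm.toEmbedding)))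

theorem stmt13 {V : Type*} [Fintype V] (G : SimpleGraph V) (K T : Finset V)
    (hdisj : Disjoint K T) (hT3 : 3 ≤ T.card)
    (hjoin : ∀ k ∈ K, ∀ t ∈ T, G.Adj k t)
    (u v : V) (hu : u ∈ T) (hv : v ∈ T) (huv : u ≠ v) (hadj : G.Adj u v)
    (hTbig : K.card.choose 2 + 2 ≤ T.card) :
    (completeGraph (Fin (K.card + 2))).IsMinor G :=
  stmt13_general G K T hdisj hjoin u v hu hv huv hadj hTbig
end
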